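/- arXiv:1511.05539 — 3 statements merged into one kernel-verified Lean document; each statement's English description precedes it below -/
import Mathlib

section
/- The user energy-efficiency function ee(p) = W·log₂(1 + p·γ) / (p/ς + p_c), defined for p ≥ 0, is strictly quasiconcave on [0, ∞). -/
noncomputable def ee (W γ ς pc p : ℝ) : ℝ :=
  W * Real.logb 2 (1 + p * γ) / (p / ς + pc)

/-- The user EE function is strictly quasiconcave on `[0, ∞)`. -/
theorem ee_strict_quasiconcave (W γ ς pc : ℝ) (hW : 0 < W) (hγ : 0 < γ)
    (hς : 0 < ς) (hς1 : ς ≤ 1) (hpc : 0 < pc) :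
    ∀ x ∈ Set.Ici (0 : ℝ), ∀ y ∈ Set.Ici (0 : ℝ), x ≠ y →
      ∀ t : ℝ, 0 < t → t < 1 →
        min (ee W γ ς pc x) (ee W γ ς pc y) < ee W γ ς pc (t * x + (1 - t) * y) := by
  intro x hx y hy hxy t ht ht1
  simp only [Set.mem_Ici] at hx hy
  set z := t * x + (1 - t) * y with hzdef
  have hz0 : 0 ≤ z := by nlinarith
  have hDx : 0 < x / ς + pc := by positivity
  have hDy : 0 < y / ς + pc := by positivity
  have hDz : 0 < z / ς + pc := by positivity
  have hL2 : 0 < Real.log 2 := Real.log_pos (by norm_num)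
  -- strict concavity of log
  have hlog : t * Real.log (1 + x * γ) + (1 - t) * Real.log (1 + y * γ)
      < Real.log (1 + z * γ) := by
    have hmx : (1 + x * γ) ∈ Set.Ioi (0 : ℝ) := by
      simp only [Set.mem_Ioi]; nlinarith
    have hmy : (1 + y * γ) ∈ Set.Ioi (0 : ℝ) := by
      simp only [Set.mem_Ioi]; nlinarith
    have hne : (1 + x * γ) ≠ (1 + y * γ) := by
      intro h
      apply hxy
      have : x * γ = y * γ := by linarith
      exact mul_right_cancel₀ (ne_of_gt hγ) this
    have h := strictConcaveOn_log_Ioi.2 hmx hmy hne ht (by linarith : (0:ℝ) < 1 - t)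
      (by ring)
    simp only [smul_eq_mul] at h
    have hz' : t * (1 + x * γ) + (1 - t) * (1 + y * γ) = 1 + z * γ := by
      rw [hzdef]; ring
    rwa [hz'] at h
  set m := min (ee W γ ς pc x) (ee W γ ς pc y) with hm
  have hmx : m ≤ ee W γ ς pc x := min_le_left _ _
  have hmy : m ≤ ee W γ ς pc y := min_le_right _ _
  simp only [ee, Real.logb] at hmx hmy ⊢
  rw [le_div_iff₀ hDx] at hmx
  rw [le_div_iff₀ hDy] at hmy
  rw [lt_div_iff₀ hDz]
  have key : t * (m * (x / ς + pc)) + (1 - t) * (m * (y / ς + pc))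
      ≤ t * (W * (Real.log (1 + x * γ) / Real.log 2))
        + (1 - t) * (W * (Real.log (1 + y * γ) / Real.log 2)) := by
    gcongr <;> linarith
  have hlin : m * (z / ς + pc)
      = t * (m * (x / ς + pc)) + (1 - t) * (m * (y / ς + pc)) := by
    rw [hzdef]; ring
  have key2 : t * (W * (Real.log (1 + x * γ) / Real.log 2))
        + (1 - t) * (W * (Real.log (1 + y * γ) / Real.log 2))
      < W * (Real.log (1 + z * γ) / Real.log 2) := by
    have hpos : 0 < W / Real.log 2 := by positivity
    have h := mul_lt_mul_of_pos_left hlog hpos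
    have e1 : t * (W * (Real.log (1 + x * γ) / Real.log 2))
        + (1 - t) * (W * (Real.log (1 + y * γ) / Real.log 2))
      = W / Real.log 2 * (t * Real.log (1 + x * γ) + (1 - t) * Real.log (1 + y * γ)) := by
      ring
    have e2 : W * (Real.log (1 + z * γ) / Real.log 2)
      = W / Real.log 2 * Real.log (1 + z * γ) := by ring
    rw [e1, e2]
    exact h
  linarith
end

section
/- The function ee(p) = W·log₂(1 + p·γ) / (p/ς + p_c) has a unique stationary point on (0, ∞), i.e., there is a unique p* > 0 with (W·γ/((1+p*γ)·ln 2))·(p*/ς + p_c) = W·log₂(1+p*γ)/ς, and this p* is the unique global maximizer of ee on [0, ∞). -/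
open Set

theorem lt_of_deriv_pos_of_deriv_neg {f : ℝ → ℝ} {a p : ℝ} (hap : a ≤ p)
    (hf : ContinuousOn f (Ici a)) (hpos : ∀ x ∈ Ioo a p, 0 < deriv f x)
    (hneg : ∀ x ∈ Ioi p, deriv f x < 0) :
    ∀ q ∈ Ici a, q ≠ p → f q < f p := by
  intro q hq hqp
  rcases hqp.lt_or_gt with hlt | hgt
  · refine strictMonoOn_of_deriv_pos (convex_Icc a p) (hf.mono Icc_subset_Ici_self)
      (fun x hx => hpos x (by rwa [interior_Icc] at hx)) ⟨hq, hlt.le⟩ ⟨hap, le_rfl⟩ hlt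
  · refine strictAntiOn_of_deriv_neg (convex_Ici p) (hf.mono (Ici_subset_Ici.2 hap))
      (fun x hx => hneg x (by rwa [interior_Ici] at hx)) self_mem_Ici hgt.le hgt

noncomputable def logRatio (γ c p : ℝ) : ℝ := Real.log (1 + p * γ) / (p + c)

noncomputable def logRatioNumer (γ c p : ℝ) : ℝ :=
  γ * (p + c) / (1 + p * γ) - Real.log (1 + p * γ)

section

variable {γ c p : ℝ}

theorem hasDerivAt_one_add_mul (γ p : ℝ) : HasDerivAt (fun p : ℝ => 1 + p * γ) γ p := by
  simpa using ((hasDerivAt_id p).mul_const γ).const_add 1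

theorem hasDerivAt_logRatioNumer (hx : 0 < 1 + p * γ) :
    HasDerivAt (logRatioNumer γ c) (-γ ^ 2 * (p + c) / (1 + p * γ) ^ 2) p := by
  have hlin : HasDerivAt (fun p : ℝ => γ * (p + c)) γ p := by
    simpa using ((hasDerivAt_id p).add_const c).const_mul γ
  refine ((hlin.div (hasDerivAt_one_add_mul γ p) hx.ne').sub
    ((hasDerivAt_one_add_mul γ p).log hx.ne')).congr_deriv ?_
  field_simp
  ring

theorem hasDerivAt_logRatio (hx : 0 < 1 + p * γ) (hpc : 0 < p + c) :
    HasDerivAt (logRatio γ c) (logRatioNumer γ c p / (p + c) ^ 2) p := by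
  refine (((hasDerivAt_one_add_mul γ p).log hx.ne').div ((hasDerivAt_id p).add_const c)
    hpc.ne').congr_deriv ?_
  rw [logRatioNumer, id]
  field_simp

theorem one_add_mul_pos (hγ : 0 < γ) (hp : 0 ≤ p) : 0 < 1 + p * γ := by positivity

theorem strictAntiOn_logRatioNumer (hγ : 0 < γ) (hc : 0 ≤ c) :
    StrictAntiOn (logRatioNumer γ c) (Ici 0) := by
  refine strictAntiOn_of_deriv_neg (convex_Ici 0) (fun x hx =>
    (hasDerivAt_logRatioNumer (one_add_mul_pos hγ hx)).continuousAt.continuousWithinAt)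
    fun x hx => ?_
  rw [interior_Ici, mem_Ioi] at hx
  rw [(hasDerivAt_logRatioNumer (one_add_mul_pos hγ hx.le)).deriv, neg_mul, neg_div]
  exact neg_neg_of_pos (by positivity)

theorem exists_pos_logRatioNumer_eq_zero (hγ : 0 < γ) (hc : 0 < c) :
    ∃ p, 0 < p ∧ logRatioNumer γ c p = 0 := by
  set M := Real.exp (1 + γ * c) / γ
  have hM : 0 < M := by positivity
  have hMγ : 1 + M * γ = Real.exp (1 + γ * c) + 1 := by
    simp only [M]; field_simp; ring
  -- at `M` the logarithm exceeds `1 + γ c`, while the rational part is at most `1 + γ c`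
  have hlog : 1 + γ * c < Real.log (1 + M * γ) := by
    rw [hMγ, Real.lt_log_iff_exp_lt (by positivity)]
    linarith
  have hrat : γ * (M + c) / (1 + M * γ) ≤ 1 + γ * c := by
    rw [div_le_iff₀ (one_add_mul_pos hγ hM.le)]
    nlinarith [mul_pos (mul_pos (mul_pos hγ hγ) hc) hM]
  have hcont : ContinuousOn (logRatioNumer γ c) (Icc 0 M) := fun x hx =>
    (hasDerivAt_logRatioNumer (one_add_mul_pos hγ hx.1)).continuousAt.continuousWithinAt
  have hsign : (0 : ℝ) ∈ Ioo (logRatioNumer γ c M) (logRatioNumer γ c 0) := by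
    simp only [logRatioNumer, mem_Ioo]
    constructor
    · linarith
    · simpa using mul_pos hγ hc
  obtain ⟨p, hp, hFp⟩ := intermediate_value_Ioo' hM.le hcont hsign
  exact ⟨p, hp.1, hFp⟩

theorem logRatio_lt_of_logRatioNumer_eq_zero (hγ : 0 < γ) (hc : 0 < c) (hp : 0 ≤ p)
    (hF : logRatioNumer γ c p = 0) :
    ∀ q ∈ Ici (0 : ℝ), q ≠ p → logRatio γ c q < logRatio γ c p := by
  have hderiv : ∀ x ∈ Ici (0 : ℝ),
      HasDerivAt (logRatio γ c) (logRatioNumer γ c x / (x + c) ^ 2) x := fun x hx =>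
    hasDerivAt_logRatio (one_add_mul_pos hγ hx) (by linarith [mem_Ici.1 hx])
  have hanti := strictAntiOn_logRatioNumer hγ hc.le
  refine lt_of_deriv_pos_of_deriv_neg hp
    (fun x hx => (hderiv x hx).continuousAt.continuousWithinAt) (fun x hx => ?_) fun x hx => ?_
  · rw [(hderiv x hx.1.le).deriv]
    have := hanti (mem_Ici.2 hx.1.le) (mem_Ici.2 hp) hx.2
    exact div_pos (by linarith) (pow_pos (by linarith [hx.1]) 2)
  · have hx0 : 0 ≤ x := hp.trans hx.le
    rw [(hderiv x hx0).deriv]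
    have := hanti (mem_Ici.2 hp) (mem_Ici.2 hx0) hx
    exact div_neg_of_neg_of_pos (by linarith) (pow_pos (by linarith) 2)

end

section

variable {W γ ς pc : ℝ}

theorem ee_eq_mul_logRatio (hς : ς ≠ 0) (p : ℝ) :
    ee W γ ς pc p = W * ς / Real.log 2 * logRatio γ (ς * pc) p := by
  have hden : p / ς + pc = (p + ς * pc) / ς := by field_simp
  rw [ee, logRatio, Real.logb, hden]
  simp only [div_eq_mul_inv, mul_inv, inv_inv]
  ring

theorem ee_stationary_iff (hW : W ≠ 0) (hς : ς ≠ 0) (p : ℝ) :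
    (W * γ / ((1 + p * γ) * Real.log 2)) * (p / ς + pc) = W * Real.logb 2 (1 + p * γ) / ς ↔
      logRatioNumer γ (ς * pc) p = 0 := by
  have hL : Real.log 2 ≠ 0 := (Real.log_pos one_lt_two).ne'
  rw [logRatioNumer, Real.logb, sub_eq_zero]
  constructor <;> intro h <;> field_simp at h ⊢ <;> linear_combination h

end

theorem ee_unique_stationary_point_general (W γ ς pc : ℝ) (hW : 0 < W) (hγ : 0 < γ)
    (hς : 0 < ς) (hpc : 0 < pc) :
    (∃! p : ℝ, 0 < p ∧
        (W * γ / ((1 + p * γ) * Real.log 2)) * (p / ς + pc)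
          = W * Real.logb 2 (1 + p * γ) / ς) ∧
    (∀ p : ℝ,
        (0 < p ∧
          (W * γ / ((1 + p * γ) * Real.log 2)) * (p / ς + pc)
            = W * Real.logb 2 (1 + p * γ) / ς) →
        ∀ q ∈ Set.Ici (0 : ℝ), q ≠ p → ee W γ ς pc q < ee W γ ς pc p) := by
  have hc : 0 < ς * pc := mul_pos hς hpc
  have hiff := ee_stationary_iff (γ := γ) (pc := pc) hW.ne' hς.ne'
  obtain ⟨p₀, hp₀, hF₀⟩ := exists_pos_logRatioNumer_eq_zero hγ hc
  refine ⟨⟨p₀, ⟨hp₀, (hiff p₀).2 hF₀⟩, fun p ⟨hp, hpstat⟩ => ?_⟩,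
    fun p ⟨hp, hpstat⟩ q hq hqp => ?_⟩
  · exact (strictAntiOn_logRatioNumer hγ hc.le).injOn (mem_Ici.2 hp.le) (mem_Ici.2 hp₀.le)
      (((hiff p).1 hpstat).trans hF₀.symm)
  · rw [ee_eq_mul_logRatio hς.ne', ee_eq_mul_logRatio hς.ne']
    exact mul_lt_mul_of_pos_left
      (logRatio_lt_of_logRatioNumer_eq_zero hγ hc hp.le ((hiff p).1 hpstat) q hq hqp)
      (by positivity)

/-- `ee` has a unique stationary point on `(0, ∞)`, which is the unique global
maximizer of `ee` on `[0, ∞)`. -/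
theorem ee_unique_stationary_point (W γ ς pc : ℝ) (hW : 0 < W) (hγ : 0 < γ)
    (hς : 0 < ς) (hς1 : ς ≤ 1) (hpc : 0 < pc) :
    (∃! p : ℝ, 0 < p ∧
        (W * γ / ((1 + p * γ) * Real.log 2)) * (p / ς + pc)
          = W * Real.logb 2 (1 + p * γ) / ς) ∧
    (∀ p : ℝ,
        (0 < p ∧
          (W * γ / ((1 + p * γ) * Real.log 2)) * (p / ς + pc)
            = W * Real.logb 2 (1 + p * γ) / ς) →
        ∀ q ∈ Set.Ici (0 : ℝ), q ≠ p → ee W γ ς pc q < ee W γ ς pc p) :=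
  ee_unique_stationary_point_general W γ ς pc hW hγ hς hpc
end

section
/- If p* > 0 maximizes ee(p) = W·log₂(1+pγ)/(p/ς + p_c) over p ≥ 0 with maximum value ee*, then p* = W·ς/(ee*·ln 2) − 1/γ. -/
/-! At an interior maximiser the derivative of `ee` vanishes, which for the quotient
`W log₂(1 + pγ) / (p/ς + p_c)` says `γ ς (p/ς + p_c) = (1 + pγ) ln(1 + pγ)`.
Dividing `W ς / ln 2` by `ee* = W ln(1 + pγ) / (ln 2 · (p/ς + p_c))` therefore gives
`(1 + pγ) / γ = p + 1/γ`. -/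

open Real

theorem IsLocalExtr.deriv_mul_eq_mul_deriv_of_div {f g : ℝ → ℝ} {f' g' x : ℝ}
    (h : IsLocalExtr (fun y => f y / g y) x) (hf : HasDerivAt f f' x) (hg : HasDerivAt g g' x)
    (hgx : g x ≠ 0) : f' * g x = f x * g' := by
  have hzero := h.hasDerivAt_eq_zero (hf.div hg hgx)
  rwa [div_eq_zero_iff, sub_eq_zero, or_iff_left (pow_ne_zero 2 hgx)] at hzero

theorem hasDerivAt_logb_one_add_mul (γ p : ℝ) (hp : 1 + p * γ ≠ 0) :
    HasDerivAt (fun p => logb 2 (1 + p * γ)) (γ / ((1 + p * γ) * log 2)) p := by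
  have hlin : HasDerivAt (fun p => 1 + p * γ) γ p := by
    simpa using ((hasDerivAt_id p).mul_const γ).const_add 1
  have hlogb := (hlin.log hp).div_const (log 2)
  rw [div_div] at hlogb
  exact hlogb

theorem ee_stationary_of_isLocalMax {W γ ς pc p : ℝ} (hloc : IsLocalMax (ee W γ ς pc) p)
    (hW : W ≠ 0) (hς : ς ≠ 0) (ha : 1 + p * γ ≠ 0) (hD : p / ς + pc ≠ 0) :
    γ * ς * (p / ς + pc) = (1 + p * γ) * log (1 + p * γ) := by
  have hnum := (hasDerivAt_logb_one_add_mul γ p ha).const_mul W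
  have hden : HasDerivAt (fun p => p / ς + pc) (1 / ς) p := by
    simpa using ((hasDerivAt_id p).div_const ς).add_const pc
  have hfoc := IsLocalExtr.deriv_mul_eq_mul_deriv_of_div
    (IsMaxFilter.isExtr (f := fun p => W * logb 2 (1 + p * γ) / (p / ς + pc)) hloc) hnum hden hD
  rw [logb] at hfoc
  generalize log (1 + p * γ) = L at hfoc ⊢
  generalize 1 + p * γ = a at ha hfoc ⊢
  field_simp at hfoc ⊢
  exact hfoc

theorem ee_maximizer_formula_general (W γ ς pc pstar eestar : ℝ) (hW : 0 < W) (hγ : 0 < γ)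
    (hς : 0 < ς) (hpc : 0 < pc) (hpstar : 0 < pstar)
    (hmax : ∀ p ∈ Set.Ici (0 : ℝ), ee W γ ς pc p ≤ ee W γ ς pc pstar)
    (heestar : eestar = ee W γ ς pc pstar) :
    pstar = W * ς / (eestar * Real.log 2) - 1 / γ := by
  have hloc : IsLocalMax (ee W γ ς pc) pstar :=
    Filter.mem_of_superset (Ioi_mem_nhds hpstar) fun p hp => hmax p (Set.mem_Ioi.mp hp).le
  have ha : 1 < 1 + pstar * γ := lt_add_of_pos_right 1 (mul_pos hpstar hγ)
  have hD : 0 < pstar / ς + pc := by positivity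
  have hfoc := ee_stationary_of_isLocalMax hloc hW.ne' hς.ne' (zero_lt_one.trans ha).ne' hD.ne'
  have hlog : 0 < log (1 + pstar * γ) := log_pos ha
  have hlog2 : 0 < log 2 := log_pos one_lt_two
  rw [heestar, ee, logb]
  generalize log (1 + pstar * γ) = L at hfoc hlog ⊢
  field_simp at hfoc ⊢
  linear_combination -hfoc

/-- If `p* > 0` maximizes the user EE over `[0, ∞)` with maximum value `ee*`,
then `p* = W ς / (ee* ln 2) - 1/γ`. -/
theorem ee_maximizer_formula (W γ ς pc pstar eestar : ℝ) (hW : 0 < W) (hγ : 0 < γ)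
    (hς : 0 < ς) (hς1 : ς ≤ 1) (hpc : 0 < pc) (hpstar : 0 < pstar)
    (hmax : ∀ p ∈ Set.Ici (0 : ℝ), ee W γ ς pc p ≤ ee W γ ς pc pstar)
    (heestar : eestar = ee W γ ς pc pstar) :
    pstar = W * ς / (eestar * Real.log 2) - 1 / γ :=
  ee_maximizer_formula_general W γ ς pc pstar eestar hW hγ hς hpc hpstar hmax heestar
end
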